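/- arXiv:2405.01732 — 5 statements merged into one kernel-verified Lean document; each statement's English description precedes it below -/
import Mathlib

section
/- For all real numbers A, B, C > 1, the function x ↦ s(x, B, C) has derivative (A − 1 − B − C) / ((A − 1)·√(A² + B² + C² + 2ABC − 1)) at the point x = A. (Lemma 2.1(3).) -/
/-- The inverse hyperbolic cosine. -/
noncomputable def arcosh (x : ℝ) : ℝ := Real.log (x + Real.sqrt (x ^ 2 - 1))

/-- Total length of the three non-alternating sides of a right-angled hyperbolic
hexagon whose alternating sides have lengths `arcosh A`, `arcosh B`, `arcosh C`. -/
noncomputable def s (A B C : ℝ) : ℝ :=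
  arcosh ((A + B * C) / Real.sqrt ((B ^ 2 - 1) * (C ^ 2 - 1))) +
  arcosh ((B + A * C) / Real.sqrt ((A ^ 2 - 1) * (C ^ 2 - 1))) +
  arcosh ((C + A * B) / Real.sqrt ((A ^ 2 - 1) * (B ^ 2 - 1)))

/-! Each of the three summands of `s x B C` has the form `arcosh (N / √M)` with
`N² - M = Δ := x² + B² + C² + 2xBC - 1`, the same for all three. Since
`d/dx arcosh (N / √M) = (2 M N' - N M') / (2 M √(N² - M))`, the derivatives are
`1 / √Δ`, `-(xB + C) / ((x² - 1) √Δ)` and `-(xC + B) / ((x² - 1) √Δ)`, whose sum is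
`(x² - 1 - (x + 1)(B + C)) / ((x² - 1) √Δ)`; cancelling `x + 1` gives the claim. -/

theorem arcosh_eq_real_arcosh : arcosh = Real.arcosh := rfl

theorem HasDerivAt.arcosh_div_sqrt {N M : ℝ → ℝ} {N' M' x : ℝ} (hN : HasDerivAt N N' x)
    (hM : HasDerivAt M M' x) (hM₀ : 0 < M x) (hN₀ : 0 < N x) (hMN : M x < N x ^ 2) :
    HasDerivAt (fun y => arcosh (N y / √(M y)))
      ((2 * M x * N' - N x * M') / (2 * M x * √(N x ^ 2 - M x))) x := by
  have hsM : 0 < √(M x) := Real.sqrt_pos.2 hM₀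
  have hquot := hN.div (hM.sqrt hM₀.ne') hsM.ne'
  have hone : 1 < N x / √(M x) := (one_lt_div hsM).2 ((Real.sqrt_lt' hN₀).2 hMN)
  have hsqrt : √((N x / √(M x)) ^ 2 - 1) = √(N x ^ 2 - M x) / √(M x) := by
    rw [div_pow, Real.sq_sqrt hM₀.le, div_sub_one hM₀.ne', Real.sqrt_div' _ hM₀.le]
  rw [arcosh_eq_real_arcosh]
  refine ((Real.hasDerivAt_arcosh hone).comp x hquot).congr_deriv ?_
  rw [hsqrt]
  field_simp
  rw [Real.sq_sqrt hM₀.le]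

theorem hexagon_disc_pos {A B C : ℝ} (hA : 1 < A) (hB : 0 ≤ B) (hC : 0 ≤ C) :
    0 < A ^ 2 + B ^ 2 + C ^ 2 + 2 * A * B * C - 1 := by
  nlinarith [mul_nonneg (mul_nonneg (by linarith : (0 : ℝ) ≤ A) hB) hC]

/-- The side of the hexagon opposite the side of length `arcosh A`. -/
noncomputable def hexagonSide (A B C : ℝ) : ℝ :=
  arcosh ((A + B * C) / √((B ^ 2 - 1) * (C ^ 2 - 1)))

theorem s_eq_hexagonSide_add (A B C : ℝ) :
    s A B C = hexagonSide A B C + hexagonSide B A C + hexagonSide C A B := rfl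

theorem hasDerivAt_hexagonSide_opposite {A B C : ℝ} (hA : 0 ≤ A) (hB : 1 < B) (hC : 1 < C) :
    HasDerivAt (fun x => hexagonSide x B C)
      (1 / √(A ^ 2 + B ^ 2 + C ^ 2 + 2 * A * B * C - 1)) A := by
  have hB' : 0 < B ^ 2 - 1 := by nlinarith
  have hC' : 0 < C ^ 2 - 1 := by nlinarith
  have hD : 0 < A ^ 2 + B ^ 2 + C ^ 2 + 2 * A * B * C - 1 := by
    nlinarith [hexagon_disc_pos hB hA (by positivity : (0 : ℝ) ≤ C)]
  have hdisc : (A + B * C) ^ 2 - (B ^ 2 - 1) * (C ^ 2 - 1) =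
      A ^ 2 + B ^ 2 + C ^ 2 + 2 * A * B * C - 1 := by ring
  have h := ((hasDerivAt_id' A).add_const (B * C)).arcosh_div_sqrt (hasDerivAt_const A _)
    (mul_pos hB' hC') (by positivity) (sub_pos.1 (hdisc ▸ hD))
  rw [hdisc, mul_zero, sub_zero, mul_one] at h
  refine h.congr_deriv ?_
  field_simp

theorem hasDerivAt_hexagonSide_adjacent {A B C : ℝ} (hA : 1 < A) (hB : 0 < B) (hC : 1 < C) :
    HasDerivAt (fun x => hexagonSide B x C)
      (-(A * B + C) / ((A ^ 2 - 1) * √(A ^ 2 + B ^ 2 + C ^ 2 + 2 * A * B * C - 1))) A := by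
  have hA' : 0 < A ^ 2 - 1 := by nlinarith
  have hC' : 0 < C ^ 2 - 1 := by nlinarith
  have hdisc : (B + A * C) ^ 2 - (A ^ 2 - 1) * (C ^ 2 - 1) =
      A ^ 2 + B ^ 2 + C ^ 2 + 2 * A * B * C - 1 := by ring
  have hD := hexagon_disc_pos hA hB.le (by positivity : (0 : ℝ) ≤ C)
  have hN := ((hasDerivAt_id' A).mul_const C).const_add B
  have hM := ((hasDerivAt_pow 2 A).sub_const 1).mul_const (C ^ 2 - 1)
  have h := hN.arcosh_div_sqrt hM (mul_pos hA' hC') (by positivity) (sub_pos.1 (hdisc ▸ hD))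
  rw [hdisc] at h
  refine h.congr_deriv ?_
  field_simp
  ring

theorem deriv_s_first_variable (A B C : ℝ) (hA : 1 < A) (hB : 1 < B) (hC : 1 < C) :
    HasDerivAt (fun x => s x B C)
      ((A - 1 - B - C) /
        ((A - 1) * Real.sqrt (A ^ 2 + B ^ 2 + C ^ 2 + 2 * A * B * C - 1))) A := by
  have hopp := hasDerivAt_hexagonSide_opposite (by positivity) hB hC
  have hadjB := hasDerivAt_hexagonSide_adjacent (B := B) hA (by positivity) hC
  have hadjC := hasDerivAt_hexagonSide_adjacent (B := C) hA (by positivity) hB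
  rw [show A ^ 2 + C ^ 2 + B ^ 2 + 2 * A * C * B - 1 =
    A ^ 2 + B ^ 2 + C ^ 2 + 2 * A * B * C - 1 by ring] at hadjC
  simp only [s_eq_hexagonSide_add]
  refine ((hopp.add hadjB).add hadjC).congr_deriv ?_
  have hA1 : A - 1 ≠ 0 := by linarith
  have hA2 : A ^ 2 - 1 ≠ 0 := by nlinarith
  have hD := hexagon_disc_pos hA (by positivity : (0 : ℝ) ≤ B) (by positivity : (0 : ℝ) ≤ C)
  field_simp
  ring
end

section
/- For all fixed real numbers B, C > 1, the function A ↦ s(A, B, C) tends to +∞ as A tends to 1 from the right, and it also tends to +∞ as A tends to +∞. (Lemma 2.1(4).) -/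
open Filter Topology

lemma arcosh_nonneg' {x : ℝ} (hx : 1 ≤ x) : 0 ≤ arcosh x := by
  have : (1:ℝ) ≤ x + Real.sqrt (x ^ 2 - 1) := le_add_of_le_of_nonneg hx (Real.sqrt_nonneg _)
  simpa [arcosh] using Real.log_nonneg this

lemma tendsto_arcosh_atTop' : Tendsto arcosh atTop atTop := by
  apply tendsto_atTop_mono' atTop (f₁ := Real.log) _ Real.tendsto_log_atTop
  filter_upwards [eventually_ge_atTop (1:ℝ)] with x hx
  exact Real.log_le_log (by linarith) (le_add_of_le_of_nonneg le_rfl (Real.sqrt_nonneg _))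

lemma arg_ge_one' {x y z : ℝ} (hx : 0 < x) (hy : 1 < y) (hz : 1 < z) :
    1 ≤ (x + y * z) / Real.sqrt ((y ^ 2 - 1) * (z ^ 2 - 1)) := by
  have hden : 0 < Real.sqrt ((y ^ 2 - 1) * (z ^ 2 - 1)) :=
    Real.sqrt_pos.2 (mul_pos (by nlinarith) (by nlinarith))
  rw [le_div_iff₀ hden, one_mul]
  calc Real.sqrt ((y ^ 2 - 1) * (z ^ 2 - 1)) ≤ Real.sqrt ((y * z) ^ 2) :=
        Real.sqrt_le_sqrt (by nlinarith)
    _ = y * z := by rw [Real.sqrt_sq (by positivity)]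
    _ ≤ x + y * z := by linarith

theorem s_tendsto_atTop (B C : ℝ) (hB : 1 < B) (hC : 1 < C) :
    Tendsto (fun A => s A B C) (𝓝[>] 1) atTop ∧
    Tendsto (fun A => s A B C) atTop atTop := by
  constructor
  · -- A → 1⁺ : the middle term blows up
    have hden : Tendsto (fun A : ℝ => Real.sqrt ((A ^ 2 - 1) * (C ^ 2 - 1))) (𝓝[>] 1)
        (𝓝[>] 0) := by
      rw [tendsto_nhdsWithin_iff]
      constructor
      · have hcont : Continuous fun A : ℝ => Real.sqrt ((A ^ 2 - 1) * (C ^ 2 - 1)) := by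
          continuity
        have h := (hcont.tendsto 1).mono_left (nhdsWithin_le_nhds (s := Set.Ioi 1))
        simpa using h
      · filter_upwards [self_mem_nhdsWithin] with A (hA : 1 < A)
        exact Real.sqrt_pos.2 (mul_pos (by nlinarith) (by nlinarith))
    have hnum : Tendsto (fun A : ℝ => B + A * C) (𝓝[>] 1) (𝓝 (B + C)) := by
      have : Tendsto (fun A : ℝ => B + A * C) (𝓝 1) (𝓝 (B + 1 * C)) := by
        exact ((continuous_const.add (continuous_id.mul continuous_const)).tendsto 1)
      simpa using this.mono_left nhdsWithin_le_nhds
    have harg : Tendsto (fun A : ℝ =>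
        (B + A * C) / Real.sqrt ((A ^ 2 - 1) * (C ^ 2 - 1))) (𝓝[>] 1) atTop := by
      have hinv : Tendsto (fun A : ℝ => (Real.sqrt ((A ^ 2 - 1) * (C ^ 2 - 1)))⁻¹)
          (𝓝[>] 1) atTop := tendsto_inv_nhdsGT_zero.comp hden
      simpa [div_eq_mul_inv] using hnum.pos_mul_atTop (by linarith) hinv
    have hmid : Tendsto (fun A : ℝ =>
        arcosh ((B + A * C) / Real.sqrt ((A ^ 2 - 1) * (C ^ 2 - 1)))) (𝓝[>] 1) atTop :=
      tendsto_arcosh_atTop'.comp harg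
    refine tendsto_atTop_mono' _ ?_ hmid
    filter_upwards [self_mem_nhdsWithin] with A (hA : 1 < A)
    have h1 : 0 ≤ arcosh ((A + B * C) / Real.sqrt ((B ^ 2 - 1) * (C ^ 2 - 1))) :=
      arcosh_nonneg' (arg_ge_one' (by linarith) hB hC)
    have h3 : 0 ≤ arcosh ((C + A * B) / Real.sqrt ((A ^ 2 - 1) * (B ^ 2 - 1))) :=
      arcosh_nonneg' (arg_ge_one' (by linarith) hA hB)
    simp only [s]; linarith
  · -- A → ∞ : the first term blows up
    have hden : 0 < Real.sqrt ((B ^ 2 - 1) * (C ^ 2 - 1)) :=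
      Real.sqrt_pos.2 (mul_pos (by nlinarith) (by nlinarith))
    have harg : Tendsto (fun A : ℝ =>
        (A + B * C) / Real.sqrt ((B ^ 2 - 1) * (C ^ 2 - 1))) atTop atTop :=
      (tendsto_atTop_add_const_right _ _ tendsto_id).atTop_div_const hden
    have hfst : Tendsto (fun A : ℝ =>
        arcosh ((A + B * C) / Real.sqrt ((B ^ 2 - 1) * (C ^ 2 - 1)))) atTop atTop :=
      tendsto_arcosh_atTop'.comp harg
    refine tendsto_atTop_mono' _ ?_ hfst
    filter_upwards [eventually_gt_atTop (1:ℝ)] with A hA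
    have h2 : 0 ≤ arcosh ((B + A * C) / Real.sqrt ((A ^ 2 - 1) * (C ^ 2 - 1))) :=
      arcosh_nonneg' (arg_ge_one' (by linarith) hA hC)
    have h3 : 0 ≤ arcosh ((C + A * B) / Real.sqrt ((A ^ 2 - 1) * (B ^ 2 - 1))) :=
      arcosh_nonneg' (arg_ge_one' (by linarith) hA hB)
    simp only [s]; linarith
end

section
/- For every real number a > 0, if h = arsinh(cosh a / sinh(a/2)), then 2h > a. (This is the key inequality in the proof of Lemma 4.3 (lem:decosys): in a right-angled hexagon with three alternating sides of equal length a, the common perpendicular h between opposite sides satisfies sinh h = cosh a / sinh(a/2), and 2h > a; hence the arcs of a hexagon decomposition of equal length are exactly the orthosystoles.) -/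
theorem orthogonal_longer_than_side (a h : ℝ) (ha : 0 < a)
    (hh : h = Real.arsinh (Real.cosh a / Real.sinh (a / 2))) :
    a < 2 * h := by
  have hs : 0 < Real.sinh (a / 2) := Real.sinh_pos_iff.2 (by linarith)
  have key : Real.sinh (a / 2) < Real.cosh a / Real.sinh (a / 2) := by
    rw [lt_div_iff₀ hs]
    have h2 : Real.cosh a = Real.cosh (a / 2) ^ 2 + Real.sinh (a / 2) ^ 2 := by
      have := Real.cosh_two_mul (a / 2)
      rw [show 2 * (a / 2) = a by ring] at this
      nlinarith [Real.cosh_sq (a / 2)]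
    nlinarith [Real.cosh_sq (a / 2)]
  have : a / 2 < h := by
    rw [hh]
    calc a / 2 = Real.arsinh (Real.sinh (a / 2)) := (Real.arsinh_sinh _).symm
      _ < _ := Real.arsinh_lt_arsinh.2 key
  linarith
end

section
/- For all real numbers b, c, l, m > 1, the set of y ∈ (0, ∞) at which the derivative of the function y ↦ s(cosh y, b, c) + s(cosh y, l, m) vanishes has at most two elements. (This is the key step in the proof of part (2) of Lemma 5.2 (lem:derivatives): the vanishing of the derivative leads to a cubic equation in z = cosh y having z = 1 as a root, so there are at most two zeros of the derivative on (0, ∞).) -/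
theorem HasDerivAt.arcosh_div_sqrt_s10 {f g : ℝ → ℝ} {f' g' x : ℝ} (hf : HasDerivAt f f' x)
    (hg : HasDerivAt g g' x) (hf₀ : 0 < f x) (hg₀ : 0 < g x) (hfg : g x < f x ^ 2) :
    HasDerivAt (fun y => arcosh (f y / √(g y)))
      ((2 * f' * g x - f x * g') / (2 * g x * √(f x ^ 2 - g x))) x := by
  have hsg : 0 < √(g x) := Real.sqrt_pos.2 hg₀
  have hgt : 1 < f x / √(g x) := (one_lt_div hsg).2 ((Real.sqrt_lt' hf₀).2 hfg)
  have hsq : √((f x / √(g x)) ^ 2 - 1) = √(f x ^ 2 - g x) / √(g x) := by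
    rw [div_pow, Real.sq_sqrt hg₀.le, div_sub_one hg₀.ne', Real.sqrt_div' _ hg₀.le]
  -- `arcosh` is definitionally `Real.arcosh`
  refine ((Real.hasDerivAt_arcosh hgt).comp x
    (hf.div (hg.sqrt hg₀.ne') hsg.ne')).congr_deriv ?_
  rw [hsq]
  field_simp
  rw [Real.sq_sqrt hg₀.le]

/-- `sDisc A B C = f ^ 2 - g` for each of the three arguments `f / √g` of `arcosh` in `s A B C`. -/
def sDisc (A B C : ℝ) : ℝ := A ^ 2 + B ^ 2 + C ^ 2 + 2 * A * B * C - 1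

lemma sDisc_pos {A B C : ℝ} (hA : 0 ≤ A) (hB : 1 < B) (hC : 1 < C) : 0 < sDisc A B C := by
  unfold sDisc
  nlinarith [mul_nonneg (mul_nonneg hA (zero_le_one.trans hB.le)) (zero_le_one.trans hC.le)]

noncomputable def sSlope (A B C : ℝ) : ℝ := (A - 1 - (B + C)) / √(sDisc A B C)

lemma hasDerivAt_s_fst {A B C : ℝ} (hA : 1 < A) (hB : 1 < B) (hC : 1 < C) :
    HasDerivAt (fun A => s A B C) (sSlope A B C / (A - 1)) A := by
  have hA2 : 0 < A ^ 2 - 1 := by nlinarith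
  have hB2 : 0 < B ^ 2 - 1 := by nlinarith
  have hC2 : 0 < C ^ 2 - 1 := by nlinarith
  have hΔ := sDisc_pos (zero_le_one.trans hA.le) hB hC
  have e₁ : (A + B * C) ^ 2 - (B ^ 2 - 1) * (C ^ 2 - 1) = sDisc A B C := by unfold sDisc; ring
  have e₂ : (B + A * C) ^ 2 - (A ^ 2 - 1) * (C ^ 2 - 1) = sDisc A B C := by unfold sDisc; ring
  have e₃ : (C + A * B) ^ 2 - (A ^ 2 - 1) * (B ^ 2 - 1) = sDisc A B C := by unfold sDisc; ring
  have hsq : HasDerivAt (fun A : ℝ => A ^ 2 - 1) (2 * A) A := by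
    simpa using (hasDerivAt_pow 2 A).sub_const 1
  have h₁ := ((hasDerivAt_id' A).add_const (B * C)).arcosh_div_sqrt_s10
    (hasDerivAt_const A ((B ^ 2 - 1) * (C ^ 2 - 1))) (by positivity) (by positivity)
    (by linarith)
  have h₂ := (((hasDerivAt_id' A).mul_const C).const_add B).arcosh_div_sqrt_s10
    (hsq.mul_const (C ^ 2 - 1)) (by positivity) (by positivity) (by linarith)
  have h₃ := (((hasDerivAt_id' A).mul_const B).const_add C).arcosh_div_sqrt_s10
    (hsq.mul_const (B ^ 2 - 1)) (by positivity) (by positivity) (by linarith)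
  refine ((h₁.add h₂).add h₃).congr_deriv ?_
  rw [e₁, e₂, e₃]
  have hA1 : A - 1 ≠ 0 := by linarith
  unfold sSlope
  field_simp
  ring

lemma hasDerivAt_sSlope {A B C : ℝ} (hA : 0 ≤ A) (hB : 1 < B) (hC : 1 < C) :
    HasDerivAt (fun A => sSlope A B C)
      ((sDisc A B C - (A - 1 - (B + C)) * (A + B * C)) / (sDisc A B C * √(sDisc A B C))) A := by
  have hΔ := sDisc_pos hA hB hC
  have hdisc : HasDerivAt (fun A => sDisc A B C) (2 * A + 2 * B * C) A := by
    have h := (((hasDerivAt_id' A).pow 2).add ((hasDerivAt_id' A).const_mul (2 * B * C))).add_const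
      (B ^ 2 + C ^ 2 - 1)
    refine (h.congr_of_eventuallyEq (.of_forall fun x => ?_)).congr_deriv ?_
    · simp only [sDisc, Pi.add_apply, Pi.pow_apply]
      ring
    · simp
  unfold sSlope
  refine ((((hasDerivAt_id' A).sub_const 1).sub_const (B + C)).div (hdisc.sqrt hΔ.ne')
    (Real.sqrt_pos.2 hΔ).ne').congr_deriv ?_
  field_simp
  rw [Real.sq_sqrt hΔ.le]
  ring

lemma strictMonoOn_sSlope {B C : ℝ} (hB : 1 < B) (hC : 1 < C) :
    StrictMonoOn (fun A => sSlope A B C) (Set.Ici 0) := by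
  refine strictMonoOn_of_deriv_pos (convex_Ici 0)
    (fun A hA => (hasDerivAt_sSlope hA hB hC).continuousAt.continuousWithinAt) fun A hA => ?_
  rw [interior_Ici] at hA
  have hA : 0 < A := hA
  have hΔ := sDisc_pos hA.le hB hC
  rw [(hasDerivAt_sSlope hA.le hB hC).deriv]
  -- the numerator expands to `ABC + (1 + B + C)(A + BC) + B² + C² - 1`
  have hnum : 0 < sDisc A B C - (A - 1 - (B + C)) * (A + B * C) := by
    unfold sDisc
    nlinarith [mul_pos (mul_pos hA (zero_lt_one.trans hB)) (zero_lt_one.trans hC),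
      mul_pos (zero_lt_one.trans hB) (zero_lt_one.trans hC)]
  positivity

lemma hasDerivAt_s_cosh {y B C : ℝ} (hy : 0 < y) (hB : 1 < B) (hC : 1 < C) :
    HasDerivAt (fun y => s (Real.cosh y) B C)
      (Real.sinh y / (Real.cosh y - 1) * sSlope (Real.cosh y) B C) y :=
  ((hasDerivAt_s_fst (Real.one_lt_cosh.2 hy.ne') hB hC).comp y
    (Real.hasDerivAt_cosh y)).congr_deriv (by ring)

theorem critical_points_at_most_two (b c l m : ℝ)
    (hb : 1 < b) (hc : 1 < c) (hl : 1 < l) (hm : 1 < m) :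
    Set.encard {y : ℝ | 0 < y ∧
        deriv (fun y => s (Real.cosh y) b c + s (Real.cosh y) l m) y = 0} ≤ 2 := by
  set φ : ℝ → ℝ := fun A => sSlope A b c + sSlope A l m
  have hφ_cosh : ∀ y, 0 < y →
      deriv (fun y => s (Real.cosh y) b c + s (Real.cosh y) l m) y = 0 → φ (Real.cosh y) = 0 := by
    intro y hy hcrit
    have hF : HasDerivAt (fun y => s (Real.cosh y) b c + s (Real.cosh y) l m)
        (Real.sinh y / (Real.cosh y - 1) * φ (Real.cosh y)) y :=
      ((hasDerivAt_s_cosh hy hb hc).add (hasDerivAt_s_cosh hy hl hm)).congr_deriv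
        (mul_add _ _ _).symm
    have hfactor : 0 < Real.sinh y / (Real.cosh y - 1) :=
      div_pos (Real.sinh_pos_iff.2 hy) (sub_pos.2 (Real.one_lt_cosh.2 hy.ne'))
    rw [hF.deriv] at hcrit
    exact (mul_eq_zero.1 hcrit).resolve_left hfactor.ne'
  have hinj : Set.InjOn (φ ∘ Real.cosh) (Set.Ici 0) :=
    (((strictMonoOn_sSlope hb hc).add (strictMonoOn_sSlope hl hm)).comp Real.cosh_strictMonoOn
      fun y _ => (Real.cosh_pos y).le).injOn
  refine le_trans (Set.encard_le_one_iff.2 fun y z hy hz => ?_) one_le_two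
  exact hinj hy.1.le hz.1.le ((hφ_cosh y hy.1 hy.2).trans (hφ_cosh z hz.1 hz.2).symm)
end

section
/- Fix a real number ℓ > 0 and a natural number n ≥ 1. Then the expression C(g) = arcosh( cosh(ℓ/(6·⌊g/n⌋)) / (cosh(ℓ/(6·⌊g/n⌋)) − 1) ), which is the lower bound for the maximal orthosystole constructed in part (2) of Theorem B (thm:natleast2) for surfaces of signature (g, n) with largest boundary length ℓ, satisfies lim_{g→∞} C(g)/log g = 2, where g ranges over natural numbers, ⌊g/n⌋ denotes the integer part of g/n, and the limit is taken as g tends to infinity. In particular, the constructed orthosystole grows at the same rate 2·log g as Bavard's upper bound. -/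
open Filter Topology

/-!
With `t = ℓ / (6 ⌊g/n⌋)` and `X(t) = cosh t / (cosh t - 1)`, the expansion `cosh t - 1 ~ t² / 2`
gives `X(t) ~ 2 / t²`, while `arcosh X = log (2 X) + o(1)` as `X → ∞`. Hence
`arcosh X(t) = log 4 - 2 log t + o(1) = 2 log ⌊g/n⌋ + O(1) = 2 log g + O(1)`.
-/

open Real hiding arcosh

lemma tendsto_sinh_div_self : Tendsto (fun t : ℝ => sinh t / t) (𝓝[≠] 0) (𝓝 1) := by
  simpa [div_eq_inv_mul] using (hasDerivAt_sinh 0).tendsto_slope_zero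

lemma cosh_sub_one_eq_two_mul_sinh_half_sq (t : ℝ) : cosh t - 1 = 2 * sinh (t / 2) ^ 2 := by
  have h := cosh_two_mul (t / 2)
  rw [mul_div_cancel₀ t two_ne_zero] at h
  rw [h, cosh_sq]
  ring

lemma tendsto_div_const_nhdsNE_zero {c : ℝ} (hc : c ≠ 0) :
    Tendsto (fun t : ℝ => t / c) (𝓝[≠] 0) (𝓝[≠] 0) :=
  tendsto_nhdsWithin_iff.2
    ⟨(continuous_id.div_const c).tendsto' 0 0 (zero_div c) |>.mono_left nhdsWithin_le_nhds,
      eventually_nhdsWithin_of_forall fun _ ht => div_ne_zero ht hc⟩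

lemma tendsto_cosh_sub_one_div_sq :
    Tendsto (fun t : ℝ => (cosh t - 1) / t ^ 2) (𝓝[≠] 0) (𝓝 (1 / 2)) := by
  have h := ((tendsto_sinh_div_self.comp (tendsto_div_const_nhdsNE_zero two_ne_zero)).pow 2).div_const 2
  rw [one_pow] at h
  refine h.congr' ?_
  filter_upwards [self_mem_nhdsWithin] with t ht
  rw [Function.comp_apply, cosh_sub_one_eq_two_mul_sinh_half_sq]
  field_simp

lemma tendsto_sq_mul_cosh_div_cosh_sub_one :
    Tendsto (fun t : ℝ => t ^ 2 * (cosh t / (cosh t - 1))) (𝓝[≠] 0) (𝓝 2) := by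
  have hcosh : Tendsto cosh (𝓝[≠] 0) (𝓝 1) := by
    simpa using (continuous_cosh.tendsto 0).mono_left nhdsWithin_le_nhds
  have h := hcosh.div tendsto_cosh_sub_one_div_sq (by norm_num)
  rw [one_div_one_div] at h
  refine h.congr' ?_
  filter_upwards [self_mem_nhdsWithin] with t ht
  simp only [Pi.div_apply]
  field_simp

lemma tendsto_cosh_div_cosh_sub_one_atTop :
    Tendsto (fun t : ℝ => cosh t / (cosh t - 1)) (𝓝[≠] 0) atTop := by
  have h : Tendsto (fun t : ℝ => cosh t - 1) (𝓝[≠] 0) (𝓝[>] 0) := by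
    refine tendsto_nhdsWithin_iff.2 ⟨?_, eventually_nhdsWithin_of_forall fun t ht => ?_⟩
    · simpa using ((continuous_cosh.tendsto 0).sub_const 1).mono_left nhdsWithin_le_nhds
    · exact sub_pos.2 (one_lt_cosh.2 ht)
  refine (tendsto_atTop_add_const_left _ 1 (tendsto_inv_nhdsGT_zero.comp h)).congr' ?_
  filter_upwards [self_mem_nhdsWithin] with t ht
  have := sub_pos.2 (one_lt_cosh.2 ht)
  simp only [Function.comp_apply]
  field_simp
  ring

lemma tendsto_arcosh_sub_log_two_mul :
    Tendsto (fun x => arcosh x - log (2 * x)) atTop (𝓝 0) := by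
  have h : Tendsto (fun x : ℝ => log ((1 + √(1 - (x ^ 2)⁻¹)) / 2)) atTop (𝓝 0) := by
    simpa using ((((tendsto_inv_atTop_zero (𝕜 := ℝ)).pow 2).const_sub 1).sqrt.const_add 1
      |>.div_const 2).log (by norm_num)
  refine h.congr' ?_
  filter_upwards [eventually_ge_atTop 1] with x hx
  have hx0 : 0 < x := by linarith
  have hsq : √(x ^ 2 - 1) = x * √(1 - (x ^ 2)⁻¹) := by
    rw [show x ^ 2 - 1 = x ^ 2 * (1 - (x ^ 2)⁻¹) by field_simp, sqrt_mul (sq_nonneg x),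
      sqrt_sq hx0.le]
  rw [arcosh, ← log_div (by positivity) (by positivity), hsq]
  congr 1
  field_simp

lemma tendsto_arcosh_cosh_div_cosh_sub_one_add_two_mul_log :
    Tendsto (fun t : ℝ => arcosh (cosh t / (cosh t - 1)) + 2 * log t) (𝓝[>] 0) (𝓝 (log 4)) := by
  have hle : 𝓝[>] (0 : ℝ) ≤ 𝓝[≠] 0 := nhdsWithin_mono _ fun t ht => ne_of_gt ht
  have hlog := ((tendsto_sq_mul_cosh_div_cosh_sub_one.mono_left hle).const_mul 2).log
    (by norm_num)
  rw [show (2 : ℝ) * 2 = 4 by norm_num] at hlog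
  have h := (tendsto_arcosh_sub_log_two_mul.comp
    (tendsto_cosh_div_cosh_sub_one_atTop.mono_left hle)).add hlog
  rw [zero_add] at h
  refine h.congr' ?_
  filter_upwards [self_mem_nhdsWithin] with t (ht : 0 < t)
  have hX : 0 < cosh t / (cosh t - 1) := div_pos (cosh_pos t) (sub_pos.2 (one_lt_cosh.2 ht.ne'))
  rw [Function.comp_apply, mul_left_comm, log_mul (x := t ^ 2) (by positivity) (by positivity),
    log_pow]
  push_cast
  ring

lemma tendsto_log_natCast_div_sub_log {n : ℕ} (hn : 0 < n) :
    Tendsto (fun g : ℕ => log ((g / n : ℕ) : ℝ) - log g) atTop (𝓝 (-log n)) := by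
  have hy : Tendsto (fun g : ℕ => (g : ℝ) / n) atTop atTop :=
    tendsto_natCast_atTop_atTop.atTop_div_const (by positivity)
  have h := ((tendsto_nat_floor_div_atTop.comp hy).div_const (n : ℝ)).log (by positivity)
  rw [one_div, log_inv] at h
  refine h.congr' ?_
  filter_upwards [eventually_ge_atTop n] with g hg
  have hm : (0 : ℝ) < (g / n : ℕ) := by exact_mod_cast Nat.div_pos hg hn
  rw [Function.comp_apply, Nat.floor_div_eq_div,
    ← log_div hm.ne' (Nat.cast_pos.2 (hn.trans_le hg)).ne']
  congr 1
  field_simp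

lemma tendsto_div_of_tendsto_sub_mul {α : Type*} {l : Filter α} {u v : α → ℝ} {c L : ℝ}
    (hv : Tendsto v l atTop) (h : Tendsto (fun x => u x - c * v x) l (𝓝 L)) :
    Tendsto (fun x => u x / v x) l (𝓝 c) := by
  have := (h.div_atTop hv).const_add c
  rw [add_zero] at this
  refine this.congr' ?_
  filter_upwards [hv.eventually_ne_atTop 0] with x hx
  field_simp
  ring

theorem constructed_orthosystole_asymptotics (ℓ : ℝ) (hℓ : 0 < ℓ) (n : ℕ) (hn : 1 ≤ n) :
    Tendsto
      (fun g : ℕ =>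
        arcosh (Real.cosh (ℓ / (6 * ((g / n : ℕ) : ℝ))) /
            (Real.cosh (ℓ / (6 * ((g / n : ℕ) : ℝ))) - 1)) /
          Real.log (g : ℝ))
      atTop (𝓝 2) := by
  have hm : Tendsto (fun g : ℕ => ((g / n : ℕ) : ℝ)) atTop atTop :=
    tendsto_natCast_atTop_atTop.comp (Nat.tendsto_div_const_atTop (by omega))
  have ht : Tendsto (fun g : ℕ => ℓ / (6 * ((g / n : ℕ) : ℝ))) atTop (𝓝[>] 0) := by
    refine (tendsto_inv_atTop_nhdsGT_zero.comp
      ((hm.const_mul_atTop (by norm_num : (0 : ℝ) < 6)).atTop_div_const hℓ)).congr fun g => ?_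
    simp only [Function.comp_apply, inv_div]
  have h := ((tendsto_arcosh_cosh_div_cosh_sub_one_add_two_mul_log.comp ht).sub_const
    (2 * log (ℓ / 6))).add ((tendsto_log_natCast_div_sub_log hn).const_mul 2)
  refine tendsto_div_of_tendsto_sub_mul (tendsto_log_atTop.comp tendsto_natCast_atTop_atTop)
    (h.congr' ?_)
  filter_upwards [hm.eventually_gt_atTop 0] with g hg
  -- `ℓ / (6 m) = (ℓ / 6) / m` with `m = ⌊g/n⌋`, so the logarithms telescope
  rw [Function.comp_apply, ← div_div, log_div (by positivity) hg.ne']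
  ring
end
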